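/- With the matrices 𝒜⁰, 𝒜¹ of the 1+1 Müller-Israel-Stewart system, the row vector l² = (0, (ϱ+q)c/u⁰, 1) is a left eigenvector of (𝒜⁰)^{-1}𝒜¹ with eigenvalue λ² = (u¹ + c·u⁰)/(c·u¹ + u⁰); i.e., l²·(𝒜⁰)^{-1}𝒜¹ = λ²·l². -/

import Mathlib

/-!
If `A0` is invertible and `w A0 = l`, then `l A0⁻¹ = w`, so `l A0⁻¹ A1 = λ l` amounts to
`w A1 = λ l`. Solving `w A0 = l` gives `w = (0, c u0, 1) / (c u1 + u0)`, and `w A1 = λ l` is then a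
direct computation; the inverse of `A0` is never written down. Invertibility comes from
`det A0 = (ϱ + q)(u0² - c² u1²) / u0` and `u0² - c² u1² = 1 + (1 - c²) u1² > 0`.
-/

open Matrix

theorem Matrix.vecMul_inv_mul_eq_smul {n R : Type*} [Fintype n] [DecidableEq n] [CommRing R]
    {A B : Matrix n n R} (hA : IsUnit A.det) {w l : n → R} {μ : R}
    (hwA : w ᵥ* A = l) (hwB : w ᵥ* B = μ • l) : l ᵥ* (A⁻¹ * B) = μ • l := by
  rw [← hwB, ← hwA, vecMul_vecMul, ← Matrix.mul_assoc, mul_nonsing_inv A hA, Matrix.one_mul]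

namespace MullerIsraelStewart

noncomputable section

variable (u0 u1 ρ c : ℝ)

/-- `ρ` stands for `ϱ + q`. -/
def A0 : Matrix (Fin 3) (Fin 3) ℝ :=
  !![u0, ρ*u1/u0, 0; 0, ρ/u0, u1/u0; 0, c^2*ρ*u1/u0, u0]

def A1 : Matrix (Fin 3) (Fin 3) ℝ :=
  !![u1, ρ, 0; 0, ρ*u1/u0^2, 1; 0, c^2*ρ, u1]

def l2 : Fin 3 → ℝ := ![0, ρ*c/u0, 1]

def w2 : Fin 3 → ℝ := (c*u1 + u0)⁻¹ • ![0, c*u0, 1]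

theorem det_A0 (hu0 : u0 ≠ 0) : (A0 u0 u1 ρ c).det = ρ * (u0^2 - c^2*u1^2) / u0 := by
  rw [A0, det_fin_three]
  simp only [of_apply, cons_val', cons_val_zero, cons_val_fin_one, cons_val_one, cons_val,
    mul_zero, zero_mul, sub_zero, add_zero]
  field_simp

theorem w2_vecMul_A0 (hu0 : u0 ≠ 0) (hw : c*u1 + u0 ≠ 0) :
    w2 u0 u1 c ᵥ* A0 u0 u1 ρ c = l2 u0 ρ c := by
  ext j
  fin_cases j <;> simp [w2, A0, l2, vecMul, dotProduct, Fin.sum_univ_three] <;> field_simp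
  ring

theorem w2_vecMul_A1 (hu0 : u0 ≠ 0) (hw : c*u1 + u0 ≠ 0) :
    w2 u0 u1 c ᵥ* A1 u0 u1 ρ c = ((u1 + c*u0)/(c*u1 + u0)) • l2 u0 ρ c := by
  ext j
  fin_cases j <;> simp [w2, A1, l2, vecMul, dotProduct, Fin.sum_univ_three] <;> field_simp
  ring

end

end MullerIsraelStewart

theorem stmt13_general (u0 u1 ϱ q c : ℝ) (hu : u0^2 = 1 + u1^2)
    (hq : 0 < ϱ + q) (hc0 : 0 < c) (hc1 : c < 1) :
    let A0 : Matrix (Fin 3) (Fin 3) ℝ :=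
      !![u0, (ϱ+q)*u1/u0, 0; 0, (ϱ+q)/u0, u1/u0; 0, c^2*(ϱ+q)*u1/u0, u0]
    let A1 : Matrix (Fin 3) (Fin 3) ℝ :=
      !![u1, ϱ+q, 0; 0, (ϱ+q)*u1/u0^2, 1; 0, c^2*(ϱ+q), u1]
    let l : Fin 3 → ℝ := ![0, (ϱ+q)*c/u0, 1]
    Matrix.vecMul l (A0⁻¹ * A1) = ((u1 + c*u0)/(c*u1 + u0)) • l := by
  intro A0 A1 l
  have hu0 : u0 ≠ 0 := by rintro rfl; nlinarith [sq_nonneg u1]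
  have hs : 0 < u0^2 - c^2*u1^2 := by nlinarith [sq_nonneg u1, mul_pos hc0 (sub_pos.2 hc1)]
  have hw : c*u1 + u0 ≠ 0 := fun h => by
    rw [show u0^2 - c^2*u1^2 = (c*u1 + u0) * (u0 - c*u1) by ring, h, zero_mul] at hs
    exact hs.false
  have hdet : IsUnit A0.det := by
    rw [isUnit_iff_ne_zero, show A0 = MullerIsraelStewart.A0 u0 u1 (ϱ+q) c from rfl,
      MullerIsraelStewart.det_A0 _ _ _ _ hu0]
    positivity
  exact vecMul_inv_mul_eq_smul hdet (MullerIsraelStewart.w2_vecMul_A0 u0 u1 (ϱ+q) c hu0 hw)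
    (MullerIsraelStewart.w2_vecMul_A1 u0 u1 (ϱ+q) c hu0 hw)

theorem stmt13 (u0 u1 ϱ q c : ℝ) (hu : u0^2 = 1 + u1^2) (hu0 : 1 ≤ u0)
    (hq : 0 < ϱ + q) (hc0 : 0 < c) (hc1 : c < 1) :
    let A0 : Matrix (Fin 3) (Fin 3) ℝ :=
      !![u0, (ϱ+q)*u1/u0, 0; 0, (ϱ+q)/u0, u1/u0; 0, c^2*(ϱ+q)*u1/u0, u0]
    let A1 : Matrix (Fin 3) (Fin 3) ℝ :=
      !![u1, ϱ+q, 0; 0, (ϱ+q)*u1/u0^2, 1; 0, c^2*(ϱ+q), u1]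
    let l : Fin 3 → ℝ := ![0, (ϱ+q)*c/u0, 1]
    Matrix.vecMul l (A0⁻¹ * A1) = ((u1 + c*u0)/(c*u1 + u0)) • l :=
  stmt13_general u0 u1 ϱ q c hu hq hc0 hc1
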